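/- Let n ≥ 3, ξ ∈ ℝ, η ∈ ℝ^(n−1), and let ρ : S^(n−2) → ℝ be continuous with ρ(Y) > 0 for every Y in the unit sphere S^(n−2) ⊂ ℝ^(n−1). For a unit vector Y ∈ ℝ^(n−1) set c(Y) = (ξ − i)·⟨Y, η⟩/(ξ² + 1) ∈ ℂ, w(Y) = (−c(Y), Y) ∈ ℂⁿ, v(Y) = (0, Y) ∈ ℂⁿ, and P(Y) = Idₙ − w(Y) v(Y)ᵀ. Then for every nonzero complex symmetric n × n matrix f, ∫_{S^(n−2)} ρ(Y) ‖P(Y) f P(Y)ᵀ‖²_F dσ(Y) > 0, where σ is the surface measure on S^(n−2) and ‖M‖²_F = Σ_{i,j} |M_{ij}|². -/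

import Mathlib

/-!
Write `B(a, b) = aᵀ f b` for the complex bilinear form of `f`. Since `P(Y)ᵀ = Id − v wᵀ` fixes
every `a` with `w ⬝ᵥ a = 0`, the vanishing of `P(Y) f P(Y)ᵀ` means that `B` vanishes on the complex
hyperplane `w(Y)^⊥`. That hyperplane contains `(0, u)` for each real `u ⊥ Y` and `(1, c Y)`.
As `n − 1 ≥ 2`, every real `u` is orthogonal to some unit `Y`, so `B((0, u), (0, u)) = 0` for all
real `u`; polarization and symmetry kill the lower `(n−1) × (n−1)` block, pairing `(0, u)` with
`(1, c Y)` then kills the first column, and pairing `(1, c Y)` with itself the corner. Hence for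
`f ≠ 0` the continuous nonnegative integrand is positive at some point, and the surface measure
charges every nonempty open set.
-/

open scoped RealInnerProductSpace Matrix
open MeasureTheory Matrix Module

section Projection

variable {n R : Type*} [Fintype n] [DecidableEq n] [CommRing R]

theorem transpose_one_sub_vecMulVec_mulVec_of_dotProduct_eq_zero {w v a : n → R}
    (ha : w ⬝ᵥ a = 0) : (1 - vecMulVec w v)ᵀ *ᵥ a = a := by
  simp [transpose_vecMulVec, sub_mulVec, vecMulVec_mulVec, ha]

theorem dotProduct_mulVec_eq_zero_of_conj_eq_zero {f : Matrix n n R} {w v a b : n → R}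
    (h : (1 - vecMulVec w v) * f * (1 - vecMulVec w v)ᵀ = 0)
    (ha : w ⬝ᵥ a = 0) (hb : w ⬝ᵥ b = 0) : a ⬝ᵥ f *ᵥ b = 0 := by
  set P := 1 - vecMulVec w v
  calc a ⬝ᵥ f *ᵥ b = (Pᵀ *ᵥ a) ⬝ᵥ f *ᵥ (Pᵀ *ᵥ b) := by
        rw [transpose_one_sub_vecMulVec_mulVec_of_dotProduct_eq_zero ha,
          transpose_one_sub_vecMulVec_mulVec_of_dotProduct_eq_zero hb]
    _ = a ⬝ᵥ (P * f * Pᵀ) *ᵥ b := by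
        rw [← vecMul_transpose, transpose_transpose, ← dotProduct_mulVec, mulVec_mulVec,
          mulVec_mulVec]
    _ = 0 := by rw [h, zero_mulVec, dotProduct_zero]

end Projection

theorem Matrix.IsSymm.dotProduct_mulVec_comm {n R : Type*} [Fintype n] [CommSemiring R]
    {f : Matrix n n R} (hf : f.IsSymm) (a b : n → R) : a ⬝ᵥ f *ᵥ b = b ⬝ᵥ f *ᵥ a := by
  rw [dotProduct_mulVec, ← hf.eq, vecMul_transpose, dotProduct_comm, hf.eq]

theorem exists_norm_eq_one_inner_eq_zero {E : Type*} [NormedAddCommGroup E]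
    [InnerProductSpace ℝ E] [FiniteDimensional ℝ E] (hE : 2 ≤ finrank ℝ E) (u : E) :
    ∃ y : E, ‖y‖ = 1 ∧ ⟪y, u⟫ = 0 := by
  have hK : (ℝ ∙ u)ᗮ ≠ ⊥ := by
    rw [Ne, ← Submodule.finrank_eq_zero]
    have := Submodule.finrank_add_finrank_orthogonal (ℝ ∙ u)
    have : finrank ℝ (ℝ ∙ u) ≤ 1 := by
      simpa using finrank_span_le_card (R := ℝ) ({u} : Set E)
    omega
  obtain ⟨z, hz, hz0⟩ := Submodule.exists_mem_ne_zero_of_ne_bot hK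
  refine ⟨‖z‖⁻¹ • z, norm_smul_inv_norm hz0, ?_⟩
  rw [real_inner_smul_left, Submodule.mem_orthogonal_singleton_iff_inner_left.mp hz, mul_zero]

theorem Matrix.eq_zero_of_sum_sum_norm_sq_eq_zero {m n 𝕜 : Type*} [Fintype m] [Fintype n]
    [NormedAddCommGroup 𝕜] {A : Matrix m n 𝕜} (h : ∑ i, ∑ j, ‖A i j‖ ^ 2 = 0) : A = 0 := by
  ext i j
  have hrow := (Finset.sum_eq_zero_iff_of_nonneg fun i _ => by positivity).mp h i
    (Finset.mem_univ i)
  have hij := (Finset.sum_eq_zero_iff_of_nonneg fun j _ => by positivity).mp hrow j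
    (Finset.mem_univ j)
  simpa using hij

namespace TransverseRayTransform

variable {m : ℕ}

def consOfReal (x₀ : ℂ) (u : EuclideanSpace ℝ (Fin m)) : Fin (m + 1) → ℂ :=
  Fin.cons x₀ fun i => (u i : ℂ)

def proj (γ : ℂ) (y : EuclideanSpace ℝ (Fin m)) : Matrix (Fin (m + 1)) (Fin (m + 1)) ℂ :=
  1 - vecMulVec (consOfReal (-γ) y) (consOfReal 0 y)

theorem consOfReal_dotProduct_consOfReal (a b : ℂ) (u v : EuclideanSpace ℝ (Fin m)) :
    consOfReal a u ⬝ᵥ consOfReal b v = a * b + (⟪u, v⟫ : ℂ) := by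
  rw [consOfReal, consOfReal, ← vecCons, ← vecCons, cons_dotProduct_cons]
  simp [dotProduct, PiLp.inner_apply, mul_comm]

theorem consOfReal_zero_add (u v : EuclideanSpace ℝ (Fin m)) :
    consOfReal 0 (u + v) = consOfReal 0 u + consOfReal 0 v := by
  ext i
  refine Fin.cases ?_ (fun k => ?_) i <;> simp [consOfReal]

theorem continuous_proj : Continuous fun p : ℂ × EuclideanSpace ℝ (Fin m) => proj p.1 p.2 := by
  have hcoord : Continuous fun p : ℂ × EuclideanSpace ℝ (Fin m) => fun i => (p.2 i : ℂ) :=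
    continuous_pi fun i => Complex.continuous_ofReal.comp
      ((EuclideanSpace.proj i).continuous.comp continuous_snd)
  exact continuous_const.sub
    ((continuous_fst.neg.finCons hcoord).matrix_vecMulVec (continuous_const.finCons hcoord))

theorem consOfReal_dotProduct_add_smul_eq_zero {γ : ℂ} {y : EuclideanSpace ℝ (Fin m)}
    (hy : ‖y‖ = 1) :
    consOfReal (-γ) y ⬝ᵥ (consOfReal 1 0 + γ • consOfReal 0 y) = 0 := by
  simp [dotProduct_add, dotProduct_smul, consOfReal_dotProduct_consOfReal, hy]

def ProjConjVanishes (f : Matrix (Fin (m + 1)) (Fin (m + 1)) ℂ) : Prop :=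
  ∀ y : EuclideanSpace ℝ (Fin m), ‖y‖ = 1 → ∃ γ, proj γ y * f * (proj γ y)ᵀ = 0

section Rigidity

variable {f : Matrix (Fin (m + 1)) (Fin (m + 1)) ℂ}

theorem ProjConjVanishes.exists_of_inner_eq_zero (hm : 2 ≤ m) (h : ProjConjVanishes f)
    (u : EuclideanSpace ℝ (Fin m)) :
    ∃ γ y, ‖y‖ = 1 ∧ consOfReal (-γ) y ⬝ᵥ consOfReal 0 u = 0 ∧ proj γ y * f * (proj γ y)ᵀ = 0 := by
  obtain ⟨y, hy, hyu⟩ := exists_norm_eq_one_inner_eq_zero (by simpa using hm) u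
  obtain ⟨γ, hγ⟩ := h y hy
  exact ⟨γ, y, hy, by simp [consOfReal_dotProduct_consOfReal, hyu], hγ⟩

theorem ProjConjVanishes.lowerBlock_quadratic_eq_zero (hm : 2 ≤ m) (h : ProjConjVanishes f)
    (u : EuclideanSpace ℝ (Fin m)) : consOfReal 0 u ⬝ᵥ f *ᵥ consOfReal 0 u = 0 := by
  obtain ⟨γ, y, -, hu, hγ⟩ := h.exists_of_inner_eq_zero hm u
  exact dotProduct_mulVec_eq_zero_of_conj_eq_zero hγ hu hu

theorem ProjConjVanishes.lowerBlock_eq_zero (hm : 2 ≤ m) (hf : f.IsSymm)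
    (h : ProjConjVanishes f) (u v : EuclideanSpace ℝ (Fin m)) :
    consOfReal 0 u ⬝ᵥ f *ᵥ consOfReal 0 v = 0 := by
  have huv := h.lowerBlock_quadratic_eq_zero hm (u + v)
  simp only [consOfReal_zero_add, mulVec_add, dotProduct_add, add_dotProduct,
    h.lowerBlock_quadratic_eq_zero hm, hf.dotProduct_mulVec_comm (consOfReal 0 v), zero_add,
    add_zero, ← two_mul, mul_eq_zero, two_ne_zero, false_or] at huv
  exact huv

theorem ProjConjVanishes.firstColumn_eq_zero (hm : 2 ≤ m) (hf : f.IsSymm)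
    (h : ProjConjVanishes f) (u : EuclideanSpace ℝ (Fin m)) :
    consOfReal 0 u ⬝ᵥ f *ᵥ consOfReal 1 0 = 0 := by
  obtain ⟨γ, y, hy, hu, hγ⟩ := h.exists_of_inner_eq_zero hm u
  have := dotProduct_mulVec_eq_zero_of_conj_eq_zero hγ hu
    (consOfReal_dotProduct_add_smul_eq_zero hy)
  simpa [mulVec_add, mulVec_smul, dotProduct_add, h.lowerBlock_eq_zero hm hf] using this

theorem ProjConjVanishes.corner_eq_zero (hm : 2 ≤ m) (hf : f.IsSymm)
    (h : ProjConjVanishes f) : consOfReal 1 0 ⬝ᵥ f *ᵥ consOfReal 1 0 = 0 := by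
  obtain ⟨y, hy, -⟩ := exists_norm_eq_one_inner_eq_zero (by simpa using hm)
    (0 : EuclideanSpace ℝ (Fin m))
  obtain ⟨γ, hγ⟩ := h y hy
  have hb := consOfReal_dotProduct_add_smul_eq_zero (γ := γ) hy
  have := dotProduct_mulVec_eq_zero_of_conj_eq_zero hγ hb hb
  simpa [mulVec_add, mulVec_smul, dotProduct_add, add_dotProduct, smul_dotProduct,
    h.lowerBlock_eq_zero hm hf, h.firstColumn_eq_zero hm hf,
    hf.dotProduct_mulVec_comm (consOfReal 1 0)] using this

theorem ProjConjVanishes.eq_zero (hm : 2 ≤ m) (hf : f.IsSymm) (h : ProjConjVanishes f) :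
    f = 0 := by
  have hsingle_zero : Pi.single 0 1 = consOfReal 1 (0 : EuclideanSpace ℝ (Fin m)) := by
    ext i; refine Fin.cases ?_ (fun k => ?_) i <;> simp [consOfReal]
  have hsingle_succ (k : Fin m) :
      Pi.single k.succ 1 = consOfReal 0 (EuclideanSpace.single k 1) := by
    ext i; refine Fin.cases ?_ (fun l => ?_) i <;> simp [consOfReal, Pi.single_apply, apply_ite]
  ext i j
  have hentry : f i j = Pi.single i 1 ⬝ᵥ f *ᵥ Pi.single j 1 := by simp
  rw [Matrix.zero_apply, hentry]
  cases i using Fin.cases <;> cases j using Fin.cases <;>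
    simp only [hsingle_zero, hsingle_succ]
  · exact h.corner_eq_zero hm hf
  · rw [hf.dotProduct_mulVec_comm]
    exact h.firstColumn_eq_zero hm hf _
  · exact h.firstColumn_eq_zero hm hf _
  · exact h.lowerBlock_eq_zero hm hf _ _

end Rigidity

theorem integral_pos {μ : Measure (Metric.sphere (0 : EuclideanSpace ℝ (Fin m)) 1)}
    [μ.IsOpenPosMeasure] [IsFiniteMeasure μ] (hm : 2 ≤ m)
    {ρ : Metric.sphere (0 : EuclideanSpace ℝ (Fin m)) 1 → ℝ} (hρcont : Continuous ρ)
    (hρpos : ∀ Y, 0 < ρ Y) {γ : Metric.sphere (0 : EuclideanSpace ℝ (Fin m)) 1 → ℂ}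
    (hγ : Continuous γ) {f : Matrix (Fin (m + 1)) (Fin (m + 1)) ℂ} (hsymm : f.IsSymm)
    (hf : f ≠ 0) :
    0 < ∫ Y, ρ Y * ∑ i, ∑ j, ‖(proj (γ Y) Y.1 * f * (proj (γ Y) Y.1)ᵀ) i j‖ ^ 2 ∂μ := by
  set g := fun Y : Metric.sphere (0 : EuclideanSpace ℝ (Fin m)) 1 =>
    ρ Y * ∑ i, ∑ j, ‖(proj (γ Y) Y.1 * f * (proj (γ Y) Y.1)ᵀ) i j‖ ^ 2
  have hP : Continuous fun Y : Metric.sphere (0 : EuclideanSpace ℝ (Fin m)) 1 => proj (γ Y) Y.1 :=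
    continuous_proj.comp (hγ.prodMk continuous_subtype_val)
  have hg : Continuous g := hρcont.mul <| continuous_finsetSum _ fun i _ =>
    continuous_finsetSum _ fun j _ =>
      (((hP.matrix_mul continuous_const).matrix_mul hP.matrix_transpose).matrix_elem i j).norm.pow 2
  have hg_nonneg : 0 ≤ g := fun Y => mul_nonneg (hρpos Y).le (by positivity)
  obtain ⟨Y, hY⟩ : ∃ Y, g Y ≠ 0 := by
    by_contra! hzero
    refine hf (ProjConjVanishes.eq_zero hm hsymm fun y hy => ⟨γ ⟨y, by simpa using hy⟩, ?_⟩)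
    exact eq_zero_of_sum_sum_norm_sq_eq_zero <|
      (mul_eq_zero.mp (hzero ⟨y, by simpa using hy⟩)).resolve_left (hρpos _).ne'
  exact hg.integral_pos_of_hasCompactSupport_nonneg_nonzero (.of_compactSpace g) hg_nonneg hY

end TransverseRayTransform

/-- **Ellipticity at base infinity for the transverse ray transform of 2-tensors.**
With `n = m + 1 ≥ 3`, for `ξ ∈ ℝ`, `η ∈ ℝ^m`, and a continuous strictly positive weight
`ρ` on the unit sphere, the quadratic form
`f ↦ ∫_{S^{m−1}} ρ(Y) ‖P(Y) f P(Y)ᵀ‖²_F dσ(Y)` is strictly positive on nonzero complex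
symmetric `n × n` matrices, where `P(Y) = Id − w(Y) v(Y)ᵀ`, `w(Y) = (−c(Y), Y)`,
`v(Y) = (0, Y)`, `c(Y) = (ξ − i)⟨Y, η⟩/(ξ² + 1)`, and `σ` is the surface measure. -/
theorem transverse_base_infinity_elliptic
    (m : ℕ) (hm : 2 ≤ m) (ξ : ℝ) (η : EuclideanSpace ℝ (Fin m))
    (ρ : Metric.sphere (0 : EuclideanSpace ℝ (Fin m)) 1 → ℝ)
    (hρcont : Continuous ρ) (hρpos : ∀ Y, 0 < ρ Y)
    (f : Matrix (Fin (m + 1)) (Fin (m + 1)) ℂ) (hsymm : f.IsSymm) (hf : f ≠ 0) :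
    0 < ∫ Y : Metric.sphere (0 : EuclideanSpace ℝ (Fin m)) 1,
        (let c : ℂ := ((ξ : ℂ) - Complex.I) *
            ((⟪(Y : EuclideanSpace ℝ (Fin m)), η⟫ : ℝ) : ℂ) / (((ξ ^ 2 + 1 : ℝ) : ℂ))
         let w : Fin (m + 1) → ℂ := Fin.cons (-c)
            (fun i => (((Y : EuclideanSpace ℝ (Fin m)) i : ℝ) : ℂ))
         let v : Fin (m + 1) → ℂ := Fin.cons 0
            (fun i => (((Y : EuclideanSpace ℝ (Fin m)) i : ℝ) : ℂ))
         let P : Matrix (Fin (m + 1)) (Fin (m + 1)) ℂ := 1 - Matrix.vecMulVec w v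
         ρ Y * ∑ i, ∑ j, ‖(P * f * Pᵀ) i j‖ ^ 2)
      ∂((volume : Measure (EuclideanSpace ℝ (Fin m))).toSphere) := by
  refine TransverseRayTransform.integral_pos hm hρcont hρpos
    (γ := fun Y => ((ξ : ℂ) - Complex.I) * ((⟪(Y : EuclideanSpace ℝ (Fin m)), η⟫ : ℝ) : ℂ) /
      (((ξ ^ 2 + 1 : ℝ) : ℂ))) ?_ hsymm hf
  fun_prop
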